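/- Let φʳ be the vector with φʳ_j = 0 for 0 ≤ j ≤ N+1 and φʳ_{j+1/2} = (−1)^j for 0 ≤ j ≤ N (the resonant mode). Then φʳ satisfies both P2 spectral equations with eigenvalue Λ = 10, its discrete L²-norm satisfies ‖φʳ‖²_{h,0} = 8/15, and its discrete H¹-norm satisfies ‖φʳ‖²_{h,1} = (16/3)·(φʳ_{N+1/2}/h)² = 16/(3h²). -/

import Mathlib

open Real Finset

/-- Discrete H¹-seminorm squared of a P2 vector with nodal components `f`
and midpoint components `g`. -/
noncomputable def normH1sq (N : ℕ) (h : ℝ) (f g : ℕ → ℝ) : ℝ :=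
  (h / 6) * ∑ j ∈ Finset.range (N + 1),
    ((-(f (j + 1) - 4 * g j + 3 * f j) / h) ^ 2
      + 4 * ((f (j + 1) - f j) / h) ^ 2
      + ((f j - 4 * g j + 3 * f (j + 1)) / h) ^ 2)

/-- Discrete L²-norm squared of a P2 vector with nodal components `f`
and midpoint components `g`. -/
noncomputable def normH0sq (N : ℕ) (h : ℝ) (f g : ℕ → ℝ) : ℝ :=
  (h / 90) * ∑ j ∈ Finset.range (N + 1),
    (7 * (f j) ^ 2
      + 32 * ((3 / 8) * f j + (3 / 4) * g j - (1 / 8) * f (j + 1)) ^ 2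
      + 12 * (g j) ^ 2
      + 32 * (-(1 / 8) * f j + (3 / 4) * g j + (3 / 8) * f (j + 1)) ^ 2
      + 7 * (f (j + 1)) ^ 2)

/-! With all nodal values zero, every element contributes a fixed multiple of its squared
midpoint value to both norms, and a pure midpoint mode satisfies the midpoint equation exactly
when `Λ = 10`; the nodal equation then only sees `ψ_{j-1} + ψ_j`, which the alternating signs
annihilate. -/

lemma normH0sq_zero_left (N : ℕ) (h : ℝ) (g : ℕ → ℝ) :
    normH0sq N h 0 g = 8 * h / 15 * ∑ j ∈ range (N + 1), g j ^ 2 := by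
  simp only [normH0sq, Pi.zero_apply, mul_sum]
  exact sum_congr rfl fun j _ => by ring

lemma normH1sq_zero_left (N : ℕ) (h : ℝ) (g : ℕ → ℝ) :
    normH1sq N h 0 g = 16 / (3 * h) * ∑ j ∈ range (N + 1), g j ^ 2 := by
  simp only [normH1sq, Pi.zero_apply, mul_sum]
  refine sum_congr rfl fun j _ => ?_
  rcases eq_or_ne h 0 with rfl | hh
  · simp
  · field_simp
    ring

lemma neg_one_pow_sq {R : Type*} [Monoid R] [HasDistribNeg R] (j : ℕ) :
    ((-1 : R) ^ j) ^ 2 = 1 := by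
  rw [← pow_mul, pow_mul', neg_one_sq, one_pow]

lemma neg_one_pow_pred_add_self {R : Type*} [Ring R] {j : ℕ} (hj : 1 ≤ j) :
    (-1 : R) ^ (j - 1) + (-1) ^ j = 0 := by
  obtain ⟨k, rfl⟩ := Nat.exists_eq_add_of_le' hj
  simp [pow_succ]

lemma sum_range_neg_one_pow_sq {R : Type*} [Ring R] (n : ℕ) :
    ∑ j ∈ range n, ((-1 : R) ^ j) ^ 2 = n := by
  simp [neg_one_pow_sq]

theorem stmt_8_general (N : ℕ) (h : ℝ) (hh : h = 1 / ((N : ℝ) + 1))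
    (φ : ℕ → ℝ) (hφ : ∀ j : ℕ, φ j = 0)
    (ψ : ℕ → ℝ) (hψ : ∀ j : ℕ, ψ j = (-1 : ℝ) ^ j) :
    (∀ j : ℕ, j ≤ N →
      -(8 / 3) * φ j + (16 / 3) * ψ j - (8 / 3) * φ (j + 1)
        - 10 * ((1 / 15) * φ j + (8 / 15) * ψ j + (1 / 15) * φ (j + 1)) = 0) ∧
    (∀ j : ℕ, 1 ≤ j → j ≤ N →
      (1 / 3) * φ (j - 1) - (8 / 3) * ψ (j - 1) + (14 / 3) * φ j - (8 / 3) * ψ j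
        + (1 / 3) * φ (j + 1)
        - 10 * (-(1 / 30) * φ (j - 1) + (1 / 15) * ψ (j - 1) + (4 / 15) * φ j
            + (1 / 15) * ψ j - (1 / 30) * φ (j + 1)) = 0) ∧
    normH0sq N h φ ψ = 8 / 15 ∧
    normH1sq N h φ ψ = (16 / 3) * (ψ N / h) ^ 2 ∧
    normH1sq N h φ ψ = 16 / (3 * h ^ 2) := by
  obtain rfl : φ = 0 := funext hφ
  obtain rfl : ψ = fun j => (-1 : ℝ) ^ j := funext hψ
  have hH1 : normH1sq N h 0 (fun j => (-1 : ℝ) ^ j) = 16 / (3 * h ^ 2) := by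
    rw [normH1sq_zero_left, sum_range_neg_one_pow_sq, hh]
    push_cast
    field_simp
  refine ⟨fun j _ => by simp only [Pi.zero_apply]; ring, fun j hj _ => ?_, ?_, ?_, hH1⟩
  · simp only [Pi.zero_apply]
    linear_combination (-10 / 3 : ℝ) * neg_one_pow_pred_add_self (R := ℝ) hj
  · rw [normH0sq_zero_left, sum_range_neg_one_pow_sq, hh]
    push_cast
    field_simp
  · rw [hH1, div_pow, neg_one_pow_sq]
    ring

theorem stmt_8 (N : ℕ) (hN : 1 ≤ N) (h : ℝ) (hh : h = 1 / ((N : ℝ) + 1))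
    (φ : ℕ → ℝ) (hφ : ∀ j : ℕ, φ j = 0)
    (ψ : ℕ → ℝ) (hψ : ∀ j : ℕ, ψ j = (-1 : ℝ) ^ j) :
    (∀ j : ℕ, j ≤ N →
      -(8 / 3) * φ j + (16 / 3) * ψ j - (8 / 3) * φ (j + 1)
        - 10 * ((1 / 15) * φ j + (8 / 15) * ψ j + (1 / 15) * φ (j + 1)) = 0) ∧
    (∀ j : ℕ, 1 ≤ j → j ≤ N →
      (1 / 3) * φ (j - 1) - (8 / 3) * ψ (j - 1) + (14 / 3) * φ j - (8 / 3) * ψ j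
        + (1 / 3) * φ (j + 1)
        - 10 * (-(1 / 30) * φ (j - 1) + (1 / 15) * ψ (j - 1) + (4 / 15) * φ j
            + (1 / 15) * ψ j - (1 / 30) * φ (j + 1)) = 0) ∧
    normH0sq N h φ ψ = 8 / 15 ∧
    normH1sq N h φ ψ = (16 / 3) * (ψ N / h) ^ 2 ∧
    normH1sq N h φ ψ = 16 / (3 * h ^ 2) :=
  stmt_8_general N h hh φ hφ ψ hψ
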